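/- arXiv:math/0503647 — 6 statements merged into one kernel-verified Lean document; each statement's English description precedes it below -/
import Mathlib

section
/- If (A, R) is a Rota-Baxter algebra of weight 0 (i.e., R(x)R(y) = R(R(x)y + xR(y)) for all x,y), then the operations x ≺ y := x·R(y) and x ≻ y := R(x)·y make A into a dendriform dialgebra, i.e., they satisfy (x≺y)≺z = x≺(y≺z + y≻z), (x≻y)≺z = x≻(y≺z), and (x≺y + x≻y)≻z = x≻(y≻z). -/
/-- A Rota-Baxter algebra `(A, R)` of weight `0` carries a dendriform dialgebra
structure with `x ≺ y = x * R y` and `x ≻ y = R x * y`. -/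
theorem stmt_0 {k A : Type*} [CommRing k] [NonUnitalRing A] [Module k A]
    [SMulCommClass k A A] [IsScalarTower k A A]
    (R : A →ₗ[k] A)
    (hRB : ∀ x y : A, R x * R y = R (R x * y + x * R y)) :
    (∀ x y z : A, (x * R y) * R z = x * R (y * R z + R y * z)) ∧
    (∀ x y z : A, (R x * y) * R z = R x * (y * R z)) ∧
    (∀ x y z : A, R (x * R y + R x * y) * z = R x * (R y * z)) := by
  refine ⟨?_, ?_, ?_⟩
  · intro x y z
    rw [mul_assoc, hRB, add_comm]
  · intro x y z
    rw [mul_assoc]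
  · intro x y z
    rw [add_comm, ← hRB, mul_assoc]
end

section
/- If (A, R) is a Rota-Baxter algebra of weight λ, then the operations x ≺ y := x·R(y), x ≻ y := R(x)·y, and x • y := λ·x·y make A into a dendriform trialgebra, i.e., they satisfy the seven trialgebra axioms with ⋆ = ≺ + ≻ + •. -/
/-- A Rota-Baxter algebra `(A, R)` of weight `λ` carries a dendriform trialgebra
structure with `x ≺ y = x * R y`, `x ≻ y = R x * y`, `x • y = λ • (x * y)`,
satisfying the seven trialgebra axioms with `⋆ = ≺ + ≻ + •`. -/
theorem stmt_1 {k A : Type*} [CommRing k] [NonUnitalRing A] [Module k A]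
    [SMulCommClass k A A] [IsScalarTower k A A]
    (lam : k) (R : A →ₗ[k] A)
    (hRB : ∀ x y : A, R x * R y = R (R x * y + x * R y + lam • (x * y))) :
    (∀ x y z : A, (x * R y) * R z = x * R (y * R z + R y * z + lam • (y * z))) ∧
    (∀ x y z : A, (R x * y) * R z = R x * (y * R z)) ∧
    (∀ x y z : A, R (x * R y + R x * y + lam • (x * y)) * z = R x * (R y * z)) ∧
    (∀ x y z : A, lam • ((R x * y) * z) = R x * (lam • (y * z))) ∧
    (∀ x y z : A, lam • ((x * R y) * z) = lam • (x * (R y * z))) ∧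
    (∀ x y z : A, (lam • (x * y)) * R z = lam • (x * (y * R z))) ∧
    (∀ x y z : A, lam • ((lam • (x * y)) * z) = lam • (x * (lam • (y * z)))) := by
  refine ⟨?_, ?_, ?_, ?_, ?_, ?_, ?_⟩ <;> intro x y z
  · rw [mul_assoc, hRB, add_comm (R y * z)]
  · rw [mul_assoc]
  · have := hRB x y
    rw [add_comm (R x * y) (x * R y)] at this
    rw [← this, mul_assoc]
  · rw [mul_assoc, mul_smul_comm]
  · rw [mul_assoc]
  · rw [smul_mul_assoc, mul_assoc]
  · rw [smul_mul_assoc, mul_assoc, mul_smul_comm]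
end

section
/- If (A, R) is a Rota-Baxter algebra of weight λ, then the operations x ≺' y := x·R(y) + λ·x·y and x ≻' y := R(x)·y make A into a dendriform dialgebra. -/
/-- A Rota-Baxter algebra `(A, R)` of weight `λ` carries a dendriform dialgebra
structure with `x ≺' y = x * R y + λ • (x * y)` and `x ≻' y = R x * y`. -/
theorem stmt_2 {k A : Type*} [CommRing k] [NonUnitalRing A] [Module k A]
    [SMulCommClass k A A] [IsScalarTower k A A]
    (lam : k) (R : A →ₗ[k] A)
    (hRB : ∀ x y : A, R x * R y = R (R x * y + x * R y + lam • (x * y))) :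
    (∀ x y z : A,
      (x * R y + lam • (x * y)) * R z + lam • ((x * R y + lam • (x * y)) * z) =
        x * R ((y * R z + lam • (y * z)) + R y * z) +
          lam • (x * ((y * R z + lam • (y * z)) + R y * z))) ∧
    (∀ x y z : A,
      (R x * y) * R z + lam • ((R x * y) * z) = R x * (y * R z + lam • (y * z))) ∧
    (∀ x y z : A,
      R ((x * R y + lam • (x * y)) + R x * y) * z = R x * (R y * z)) := by
  refine ⟨fun x y z => ?_, fun x y z => ?_, fun x y z => ?_⟩
  · have h := hRB y z
    have : R ((y * R z + lam • (y * z)) + R y * z) = R y * R z := by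
      rw [h]; congr 1; abel
    rw [this]
    simp only [mul_add, add_mul, smul_mul_assoc, mul_smul_comm, smul_add, mul_assoc, smul_smul]
    abel
  · simp only [mul_add, mul_smul_comm, smul_mul_assoc, mul_assoc]
  · have h := hRB x y
    have : R ((x * R y + lam • (x * y)) + R x * y) = R x * R y := by
      rw [h]; congr 1; abel
    rw [this, mul_assoc]
end

section
/- With 𝔛_∞ = ⋃_{n≥0} 𝔛_n the set of Rota-Baxter words over X, the four union components of 𝔛_∞ = Λ(X, 𝔛_∞) are pairwise disjoint; equivalently, 𝔛_∞ is the disjoint union of (⋃_{r≥1} (X⌊𝔛_∞⌋)^r), (⋃_{r≥0} (X⌊𝔛_∞⌋)^r X), (⋃_{r≥1} (⌊𝔛_∞⌋X)^r), and (⋃_{r≥0} (⌊𝔛_∞⌋X)^r ⌊𝔛_∞⌋). -/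
/-! Rota-Baxter words over an alphabet `X`, with two bracket symbols. The
alphabet is `X ⊕ Bool`, where `Sum.inr false` is the opening bracket `⌊` and
`Sum.inr true` is the closing bracket `⌋`. Words are lists; sets of words are
combined by concatenation. -/

/-- The opening bracket `⌊`. -/
def lb {X : Type*} : X ⊕ Bool := Sum.inr false

/-- The closing bracket `⌋`. -/
def rb {X : Type*} : X ⊕ Bool := Sum.inr true

/-- The one-letter word given by `x ∈ X`. -/
def letter {X : Type*} (x : X) : List (X ⊕ Bool) := [Sum.inl x]

/-- The bracketed word `⌊w⌋`. -/
def bracket {X : Type*} (w : List (X ⊕ Bool)) : List (X ⊕ Bool) := lb :: (w ++ [rb])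

/-- Concatenation of two sets of words. -/
def catS {X : Type*} (Y Z : Set (List (X ⊕ Bool))) : Set (List (X ⊕ Bool)) :=
  {w | ∃ y ∈ Y, ∃ z ∈ Z, w = y ++ z}

/-- The set `⌊Z⌋`. -/
def brS {X : Type*} (Z : Set (List (X ⊕ Bool))) : Set (List (X ⊕ Bool)) := bracket '' Z

/-- `powS Y n` is the `(n+1)`-fold concatenation power `Y^{n+1}`. -/
def powS {X : Type*} (Y : Set (List (X ⊕ Bool))) : ℕ → Set (List (X ⊕ Bool))
  | 0 => Y
  | n + 1 => catS Y (powS Y n)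

/-- The set of one-letter words, identified with `X`. -/
def lettersS (X : Type*) : Set (List (X ⊕ Bool)) := Set.range letter

/-- The alternating product `Λ(Y, Z)`:
`(⋃_{r≥1} (Y⌊Z⌋)^r) ∪ (⋃_{r≥0} (Y⌊Z⌋)^r Y) ∪ (⋃_{r≥1} (⌊Z⌋Y)^r) ∪ (⋃_{r≥0} (⌊Z⌋Y)^r ⌊Z⌋)`. -/
def altS {X : Type*} (Y Z : Set (List (X ⊕ Bool))) : Set (List (X ⊕ Bool)) :=
  (⋃ n, powS (catS Y (brS Z)) n) ∪ (Y ∪ ⋃ n, catS (powS (catS Y (brS Z)) n) Y) ∪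
  (⋃ n, powS (catS (brS Z) Y) n) ∪ (brS Z ∪ ⋃ n, catS (powS (catS (brS Z) Y) n) (brS Z))

/-- `𝔛₀ = X`, `𝔛_{n+1} = Λ(X, 𝔛_n)`. -/
def frakX (X : Type*) : ℕ → Set (List (X ⊕ Bool))
  | 0 => lettersS X
  | n + 1 => altS (lettersS X) (frakX X n)

/-- `𝔛_∞ = ⋃_n 𝔛_n`, the set of Rota-Baxter words over `X`. -/
def frakXinf (X : Type*) : Set (List (X ⊕ Bool)) := ⋃ n, frakX X n

/-!
A word of `Λ(X, ⋃ₙ Zₙ)` involves only finitely many words of the `Zₙ`, so for an increasing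
chain it already lies in some `Λ(X, Zₙ)`: the map `Z ↦ Λ(X, Z)` is ω-Scott continuous. Since
`X ⊆ Λ(X, X)`, Kleene's fixed point theorem applies to the iterates `𝔛ₙ = Λ(X, ·)ⁿ(X)` and gives
`𝔛_∞ = Λ(X, 𝔛_∞)`. The four components of `Λ(X, Z)` are disjoint because they are told apart by
whether their words begin, and whether they end, with a letter of `X` or with a bracket.
-/

open OmegaCompletePartialOrder

lemma catS_mono {X : Type*} {Y Y' Z Z' : Set (List (X ⊕ Bool))} (hY : Y ⊆ Y') (hZ : Z ⊆ Z') :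
    catS Y Z ⊆ catS Y' Z' := by
  rintro w ⟨y, hy, z, hz, rfl⟩
  exact ⟨y, hY hy, z, hZ hz, rfl⟩

lemma subset_altS {X : Type*} (Y Z : Set (List (X ⊕ Bool))) : Y ⊆ altS Y Z :=
  fun _ hw => Or.inl (Or.inl (Or.inr (Or.inl hw)))

namespace OmegaCompletePartialOrder.ωScottContinuous

variable {X α : Type*} [OmegaCompletePartialOrder α] {f g : α → Set (List (X ⊕ Bool))}

@[fun_prop]
lemma catS (hf : ωScottContinuous f) (hg : ωScottContinuous g) :
    ωScottContinuous fun a => _root_.catS (f a) (g a) := by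
  refine of_monotone_map_ωSup
    ⟨fun a b hab => catS_mono (hf.monotone hab) (hg.monotone hab), fun c => ?_⟩
  refine le_antisymm ?_ <| ωSup_le _ _ fun i =>
    catS_mono (hf.monotone (le_ωSup c i)) (hg.monotone (le_ωSup c i))
  rw [hf.map_ωSup, hg.map_ωSup]
  rintro w ⟨y, hy, z, hz, rfl⟩
  obtain ⟨i, hi⟩ := Set.mem_iUnion.1 hy
  obtain ⟨j, hj⟩ := Set.mem_iUnion.1 hz
  exact Set.mem_iUnion.2 ⟨max i j, y, hf.monotone (c.mono (le_max_left i j)) hi,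
    z, hg.monotone (c.mono (le_max_right i j)) hj, rfl⟩

@[fun_prop]
lemma brS (hf : ωScottContinuous f) : ωScottContinuous fun a => _root_.brS (f a) := by
  refine of_monotone_map_ωSup
    ⟨fun a b hab => Set.image_mono (hf.monotone hab), fun c => ?_⟩
  rw [hf.map_ωSup]
  exact Set.image_iUnion

@[fun_prop]
lemma powS (hf : ωScottContinuous f) (n : ℕ) : ωScottContinuous fun a => _root_.powS (f a) n := by
  induction n with
  | zero => exact hf
  | succ n ih => exact hf.catS ih

@[fun_prop]
lemma union (hf : ωScottContinuous f) (hg : ωScottContinuous g) :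
    ωScottContinuous fun a => f a ∪ g a :=
  CompleteLattice.ωScottContinuous.sup hf hg

@[fun_prop]
lemma iUnion {F : ℕ → α → Set (List (X ⊕ Bool))} (hF : ∀ n, ωScottContinuous (F n)) :
    ωScottContinuous fun a => ⋃ n, F n a := by
  convert CompleteLattice.ωScottContinuous.iSup hF using 1
  exact funext fun a => (iSup_apply ..).symm

end OmegaCompletePartialOrder.ωScottContinuous

lemma ωScottContinuous_altS {X : Type*} (Y : Set (List (X ⊕ Bool))) :
    ωScottContinuous (altS Y) := by
  unfold altS
  fun_prop

lemma frakX_eq_iterate (X : Type*) (n : ℕ) :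
    frakX X n = (altS (lettersS X))^[n] (lettersS X) := by
  induction n with
  | zero => rfl
  | succ n ih => rw [Function.iterate_succ_apply', ← ih]; rfl

lemma frakXinf_eq_altS (X : Type*) : frakXinf X = altS (lettersS X) (frakXinf X) := by
  let F := ContinuousHom.ofFun _ (ωScottContinuous_altS (lettersS X))
  have hfix := fixedPoints.ωSup_iterate_mem_fixedPoint F (lettersS X) (subset_altS _ _)
  have hsup : frakXinf X = ωSup (fixedPoints.iterateChain F (lettersS X) (subset_altS _ _)) :=
    Set.iUnion_congr (frakX_eq_iterate X)
  rw [hsup]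
  exact hfix.symm

section EndSymbols

variable {X : Type*}

def wordsWithEnds (p q : Bool) : Set (List (X ⊕ Bool)) :=
  {w | w.head?.map Sum.isLeft = some p ∧ w.getLast?.map Sum.isLeft = some q}

lemma ne_nil_of_mem_wordsWithEnds {p q : Bool} {w : List (X ⊕ Bool)}
    (hw : w ∈ wordsWithEnds p q) : w ≠ [] := by
  rintro rfl
  simp [wordsWithEnds] at hw

lemma disjoint_wordsWithEnds {p q p' q' : Bool} (h : (p, q) ≠ (p', q')) :
    Disjoint (wordsWithEnds (X := X) p q) (wordsWithEnds p' q') := by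
  rw [Set.disjoint_left]
  rintro w ⟨hp, hq⟩ ⟨hp', hq'⟩
  rw [hp, Option.some_inj] at hp'
  rw [hq, Option.some_inj] at hq'
  exact h (by rw [hp', hq'])

lemma lettersS_subset_wordsWithEnds : lettersS X ⊆ wordsWithEnds true true := by
  rintro _ ⟨x, rfl⟩
  exact ⟨rfl, rfl⟩

lemma brS_subset_wordsWithEnds (Z : Set (List (X ⊕ Bool))) :
    brS Z ⊆ wordsWithEnds false false := by
  rintro _ ⟨z, -, rfl⟩
  refine ⟨rfl, ?_⟩
  rw [bracket, ← List.cons_append, List.getLast?_concat]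
  rfl

lemma catS_subset_wordsWithEnds {Y Z : Set (List (X ⊕ Bool))} {p q p' q' : Bool}
    (hY : Y ⊆ wordsWithEnds p q) (hZ : Z ⊆ wordsWithEnds p' q') :
    catS Y Z ⊆ wordsWithEnds p q' := by
  rintro _ ⟨y, hy, z, hz, rfl⟩
  refine ⟨?_, ?_⟩
  · rw [List.head?_append_of_ne_nil _ (ne_nil_of_mem_wordsWithEnds (hY hy))]
    exact (hY hy).1
  · rw [List.getLast?_append_of_ne_nil _ (ne_nil_of_mem_wordsWithEnds (hZ hz))]
    exact (hZ hz).2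

lemma powS_subset_wordsWithEnds {Y : Set (List (X ⊕ Bool))} {p q : Bool}
    (hY : Y ⊆ wordsWithEnds p q) : ∀ n, powS Y n ⊆ wordsWithEnds p q
  | 0 => hY
  | n + 1 => catS_subset_wordsWithEnds hY (powS_subset_wordsWithEnds hY n)

theorem pairwise_disjoint_altS_components {Y Z : Set (List (X ⊕ Bool))}
    (hY : Y ⊆ wordsWithEnds true true) :
    ([⋃ n, powS (catS Y (brS Z)) n, Y ∪ ⋃ n, catS (powS (catS Y (brS Z)) n) Y,
      ⋃ n, powS (catS (brS Z) Y) n, brS Z ∪ ⋃ n, catS (powS (catS (brS Z) Y) n) (brS Z)] :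
      List (Set (List (X ⊕ Bool)))).Pairwise Disjoint := by
  have hZ := brS_subset_wordsWithEnds Z
  have hYZ := catS_subset_wordsWithEnds hY hZ
  have hZY := catS_subset_wordsWithEnds hZ hY
  have h₁ : ⋃ n, powS (catS Y (brS Z)) n ⊆ wordsWithEnds true false :=
    Set.iUnion_subset (powS_subset_wordsWithEnds hYZ)
  have h₂ : Y ∪ ⋃ n, catS (powS (catS Y (brS Z)) n) Y ⊆ wordsWithEnds true true :=
    Set.union_subset hY <| Set.iUnion_subset fun n =>
      catS_subset_wordsWithEnds (powS_subset_wordsWithEnds hYZ n) hY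
  have h₃ : ⋃ n, powS (catS (brS Z) Y) n ⊆ wordsWithEnds false true :=
    Set.iUnion_subset (powS_subset_wordsWithEnds hZY)
  have h₄ : brS Z ∪ ⋃ n, catS (powS (catS (brS Z) Y) n) (brS Z) ⊆ wordsWithEnds false false :=
    Set.union_subset hZ <| Set.iUnion_subset fun n =>
      catS_subset_wordsWithEnds (powS_subset_wordsWithEnds hZY n) hZ
  simp only [List.pairwise_cons, List.mem_cons, List.not_mem_nil, forall_eq_or_imp,
    IsEmpty.forall_iff, forall_const, List.Pairwise.nil, and_true]
  refine ⟨⟨?_, ?_, ?_⟩, ⟨?_, ?_⟩, ?_⟩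
  · exact (disjoint_wordsWithEnds (by decide)).mono h₁ h₂
  · exact (disjoint_wordsWithEnds (by decide)).mono h₁ h₃
  · exact (disjoint_wordsWithEnds (by decide)).mono h₁ h₄
  · exact (disjoint_wordsWithEnds (by decide)).mono h₂ h₃
  · exact (disjoint_wordsWithEnds (by decide)).mono h₂ h₄
  · exact (disjoint_wordsWithEnds (by decide)).mono h₃ h₄

end EndSymbols

/-- `𝔛_∞` is the disjoint union of the four components of `Λ(X, 𝔛_∞)`:
`⋃_{r≥1}(X⌊𝔛_∞⌋)^r`, `⋃_{r≥0}(X⌊𝔛_∞⌋)^r X`, `⋃_{r≥1}(⌊𝔛_∞⌋X)^r`, and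
`⋃_{r≥0}(⌊𝔛_∞⌋X)^r ⌊𝔛_∞⌋`. -/
theorem stmt_9 (X : Type*) :
    frakXinf X =
      (⋃ n, powS (catS (lettersS X) (brS (frakXinf X))) n) ∪
        (lettersS X ∪ ⋃ n, catS (powS (catS (lettersS X) (brS (frakXinf X))) n) (lettersS X)) ∪
        (⋃ n, powS (catS (brS (frakXinf X)) (lettersS X)) n) ∪
        (brS (frakXinf X) ∪
          ⋃ n, catS (powS (catS (brS (frakXinf X)) (lettersS X)) n) (brS (frakXinf X))) ∧
    ([(⋃ n, powS (catS (lettersS X) (brS (frakXinf X))) n),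
      (lettersS X ∪ ⋃ n, catS (powS (catS (lettersS X) (brS (frakXinf X))) n) (lettersS X)),
      (⋃ n, powS (catS (brS (frakXinf X)) (lettersS X)) n),
      (brS (frakXinf X) ∪
        ⋃ n, catS (powS (catS (brS (frakXinf X)) (lettersS X)) n) (brS (frakXinf X)))] :
      List (Set (List (X ⊕ Bool)))).Pairwise Disjoint :=
  ⟨frakXinf_eq_altS X, pairwise_disjoint_altS_components lettersS_subset_wordsWithEnds⟩
end

section
/- Every Rota-Baxter word 𝔵 ∈ 𝔛_∞ has a unique standard decomposition 𝔵 = 𝔵₁𝔵₂⋯𝔵_b (concatenation) where each factor 𝔵_i lies alternately in X or in ⌊𝔛_∞⌋ (i.e., consecutive factors are of different types). -/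
/-- A list of factors is a standard decomposition candidate: it is nonempty,
each factor is either a letter from `X` or a bracketed Rota-Baxter word
`⌊w⌋` with `w ∈ 𝔛_∞`, and consecutive factors are of different types
(letters and bracketed words alternate). -/
def IsStd {X : Type*} (L : List (List (X ⊕ Bool))) : Prop :=
  L ≠ [] ∧
  (∀ f ∈ L, (∃ x : X, f = letter x) ∨ f ∈ brS (frakXinf X)) ∧
  L.Chain' (fun f g => (∃ x : X, f = letter x) ↔ ¬ ∃ x : X, g = letter x)


/-! Brackets in a Rota-Baxter word are balanced, so a closing bracket `⌋` that
matches a given `⌊` is determined by the word: reading a word from the left, the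
first factor (a letter, or `⌊` up to its matching `⌋`) is therefore determined,
which gives uniqueness of the decomposition even without the alternation
condition. Existence follows by unfolding the alternating products `Λ(X, 𝔛ₙ)`,
keeping track of the types of the first and last factors so that alternation
survives concatenation. -/

namespace RotaBaxterWord

variable {X : Type*}

def closeCount (w : List (X ⊕ Bool)) : ℕ := w.countP (· matches Sum.inr true)

def openCount (w : List (X ⊕ Bool)) : ℕ := w.countP (· matches Sum.inr false)

@[simp]
lemma closeCount_append (y z : List (X ⊕ Bool)) :
    closeCount (y ++ z) = closeCount y + closeCount z :=
  List.countP_append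

@[simp]
lemma openCount_append (y z : List (X ⊕ Bool)) :
    openCount (y ++ z) = openCount y + openCount z :=
  List.countP_append

@[simp]
lemma closeCount_lb_cons (w : List (X ⊕ Bool)) : closeCount (lb :: w) = closeCount w := by
  simp [closeCount, lb]

@[simp]
lemma openCount_lb_cons (w : List (X ⊕ Bool)) : openCount (lb :: w) = openCount w + 1 := by
  simp [openCount, lb]

@[simp]
lemma closeCount_rb : closeCount [(rb : X ⊕ Bool)] = 1 := rfl

@[simp]
lemma openCount_rb : openCount [(rb : X ⊕ Bool)] = 0 := rfl

def IsBalanced (w : List (X ⊕ Bool)) : Prop :=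
  (∀ n, closeCount (w.take n) ≤ openCount (w.take n)) ∧ closeCount w = openCount w

lemma IsBalanced.append {y z : List (X ⊕ Bool)} (hy : IsBalanced y) (hz : IsBalanced z) :
    IsBalanced (y ++ z) := by
  refine ⟨fun n => ?_, by simp [hy.2, hz.2]⟩
  rw [List.take_append, closeCount_append, openCount_append]
  exact Nat.add_le_add (hy.1 n) (hz.1 _)

lemma isBalanced_letter (x : X) : IsBalanced (letter x) := by
  refine ⟨fun n => ?_, by simp [letter, closeCount, openCount]⟩
  cases n <;> simp [letter, closeCount, openCount]

lemma isBalanced_bracket {w : List (X ⊕ Bool)} (hw : IsBalanced w) : IsBalanced (bracket w) := by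
  refine ⟨fun n => ?_, by simp [bracket, hw.2]⟩
  cases n with
  | zero => simp [closeCount, openCount]
  | succ n =>
    have hrb : closeCount (([rb] : List (X ⊕ Bool)).take (n - w.length)) ≤ 1 :=
      List.countP_le_length.trans (by simp)
    rw [bracket, List.take_succ_cons, List.take_append, closeCount_lb_cons, openCount_lb_cons,
      closeCount_append, openCount_append]
    have := hw.1 n
    omega

lemma IsBalanced.eq_of_append_rb {w₁ w₂ s₁ s₂ : List (X ⊕ Bool)} (h₁ : IsBalanced w₁)
    (h₂ : IsBalanced w₂) (h : w₁ ++ rb :: s₁ = w₂ ++ rb :: s₂) : w₁ = w₂ ∧ s₁ = s₂ := by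
  -- A shorter `u` would make `u ++ [⌋]` a prefix of `v` closing more brackets than it opens.
  have not_shorter : ∀ {u v s t : List (X ⊕ Bool)}, IsBalanced u → IsBalanced v →
      u ++ rb :: s = v ++ rb :: t → ¬ u.length < v.length := by
    intro u v s t hu hv huv hlt
    have hprefix : v.take (u.length + 1) = u ++ [rb] := by
      rw [← List.take_append_of_le_length hlt, ← huv, List.take_append]
      simp
    have := hv.1 (u.length + 1)
    rw [hprefix, closeCount_append, openCount_append, hu.2] at this
    simp at this
  obtain ⟨rfl, hs⟩ := List.append_inj h
    (le_antisymm (not_lt.1 (not_shorter h₂ h₁ h.symm)) (not_lt.1 (not_shorter h₁ h₂ h)))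
  exact ⟨rfl, List.cons_injective hs⟩

section Closure

variable {S Y Z : Set (List (X ⊕ Bool))}

lemma catS_subset (hS : ∀ y ∈ S, ∀ z ∈ S, y ++ z ∈ S) (hY : Y ⊆ S) (hZ : Z ⊆ S) :
    catS Y Z ⊆ S := by
  rintro _ ⟨y, hy, z, hz, rfl⟩
  exact hS y (hY hy) z (hZ hz)

lemma powS_subset (hS : ∀ y ∈ S, ∀ z ∈ S, y ++ z ∈ S) (hY : Y ⊆ S) (n : ℕ) :
    powS Y n ⊆ S := by
  induction n with
  | zero => exact hY
  | succ n ih => exact catS_subset hS hY ih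

lemma altS_subset (hS : ∀ y ∈ S, ∀ z ∈ S, y ++ z ∈ S) (hY : Y ⊆ S) (hZ : brS Z ⊆ S) :
    altS Y Z ⊆ S := by
  have hYZ := powS_subset hS (catS_subset hS hY hZ)
  have hZY := powS_subset hS (catS_subset hS hZ hY)
  simp only [altS, Set.union_subset_iff, Set.iUnion_subset_iff]
  exact ⟨⟨⟨hYZ, hY, fun n => catS_subset hS (hYZ n) hY⟩, hZY⟩, hZ,
    fun n => catS_subset hS (hZY n) hZ⟩

end Closure

lemma frakX_subset_isBalanced (n : ℕ) : frakX X n ⊆ {w | IsBalanced w} := by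
  have hletters : lettersS X ⊆ {w | IsBalanced w} := by
    rintro _ ⟨x, rfl⟩
    exact isBalanced_letter x
  induction n with
  | zero => exact hletters
  | succ n ih =>
    refine altS_subset (fun y hy z hz => IsBalanced.append hy hz) hletters ?_
    rintro _ ⟨w, hw, rfl⟩
    exact isBalanced_bracket (ih hw)

lemma frakXinf_subset_isBalanced : frakXinf X ⊆ {w | IsBalanced w} :=
  Set.iUnion_subset frakX_subset_isBalanced

def IsLetter (f : List (X ⊕ Bool)) : Prop := ∃ x, f = letter x

def IsFactor (f : List (X ⊕ Bool)) : Prop := IsLetter f ∨ ∃ w, IsBalanced w ∧ f = bracket w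

lemma IsFactor.ne_nil {f : List (X ⊕ Bool)} (hf : IsFactor f) : f ≠ [] := by
  rcases hf with ⟨x, rfl⟩ | ⟨w, -, rfl⟩ <;> simp [letter, bracket]

lemma IsFactor.append_inj {f₁ f₂ s₁ s₂ : List (X ⊕ Bool)} (h₁ : IsFactor f₁) (h₂ : IsFactor f₂)
    (h : f₁ ++ s₁ = f₂ ++ s₂) : f₁ = f₂ ∧ s₁ = s₂ := by
  rcases h₁ with ⟨x₁, rfl⟩ | ⟨w₁, hw₁, rfl⟩ <;> rcases h₂ with ⟨x₂, rfl⟩ | ⟨w₂, hw₂, rfl⟩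
  · simp_all [letter]
  · simp [letter, bracket, lb] at h
  · simp [letter, bracket, lb] at h
  · simp only [bracket, List.cons_append, List.cons.injEq, true_and, List.append_assoc] at h
    obtain ⟨rfl, rfl⟩ := hw₁.eq_of_append_rb hw₂ h
    exact ⟨rfl, rfl⟩

lemma eq_of_flatten_eq {L₁ L₂ : List (List (X ⊕ Bool))} (h₁ : ∀ f ∈ L₁, IsFactor f)
    (h₂ : ∀ f ∈ L₂, IsFactor f) (h : L₁.flatten = L₂.flatten) : L₁ = L₂ := by
  induction L₁ generalizing L₂ with
  | nil =>
    cases L₂ with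
    | nil => rfl
    | cons f₂ L₂ => simp_all [(h₂ f₂ (by simp)).ne_nil]
  | cons f₁ L₁ ih =>
    cases L₂ with
    | nil => simp_all [(h₁ f₁ (by simp)).ne_nil]
    | cons f₂ L₂ =>
      simp only [List.mem_cons, forall_eq_or_imp, List.flatten_cons] at h₁ h₂ h
      obtain ⟨rfl, htail⟩ := h₁.1.append_inj h₂.1 h
      rw [ih h₁.2 h₂.2 htail]

lemma IsStd.isFactor {L : List (List (X ⊕ Bool))} (hL : IsStd L) : ∀ f ∈ L, IsFactor f := by
  intro f hf
  rcases hL.2.1 f hf with hx | ⟨w, hw, rfl⟩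
  · exact Or.inl hx
  · exact Or.inr ⟨w, frakXinf_subset_isBalanced hw, rfl⟩

lemma IsStd.append {L₁ L₂ : List (List (X ⊕ Bool))} (h₁ : IsStd L₁) (h₂ : IsStd L₂)
    (h : ∀ f ∈ L₁.getLast?, ∀ g ∈ L₂.head?, (IsLetter f ↔ ¬ IsLetter g)) :
    IsStd (L₁ ++ L₂) := by
  refine ⟨by simp [h₁.1], fun f hf => ?_, h₁.2.2.append h₂.2.2 h⟩
  rcases List.mem_append.1 hf with hf | hf
  exacts [h₁.2.1 f hf, h₂.2.1 f hf]

def stdDecomposable (first last : Bool) : Set (List (X ⊕ Bool)) :=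
  {w | ∃ L, IsStd L ∧ w = L.flatten ∧
    (∀ f ∈ L.head?, IsLetter f ↔ first) ∧ (∀ f ∈ L.getLast?, IsLetter f ↔ last)}

lemma lettersS_subset_stdDecomposable : lettersS X ⊆ stdDecomposable true true := by
  rintro _ ⟨x, rfl⟩
  have hx : IsLetter (letter x) := ⟨x, rfl⟩
  exact ⟨[letter x], ⟨by simp, by simp, List.isChain_singleton _⟩, by simp,
    by simpa using hx, by simpa using hx⟩

lemma brS_subset_stdDecomposable {Z : Set (List (X ⊕ Bool))} (hZ : Z ⊆ frakXinf X) :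
    brS Z ⊆ stdDecomposable false false := by
  rintro _ ⟨w, hw, rfl⟩
  have hnot : ¬ IsLetter (bracket w) := by
    rintro ⟨x, hx⟩
    simp [bracket, letter, lb] at hx
  exact ⟨[bracket w], ⟨by simp, by simpa using Or.inr ⟨w, hZ hw, rfl⟩, List.isChain_singleton _⟩,
    by simp, by simpa using hnot, by simpa using hnot⟩

section Concatenation

variable {Y Z : Set (List (X ⊕ Bool))} {s t u v : Bool}

lemma catS_subset_stdDecomposable (hY : Y ⊆ stdDecomposable s t)
    (hZ : Z ⊆ stdDecomposable u v) (htu : t ≠ u) : catS Y Z ⊆ stdDecomposable s v := by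
  rintro _ ⟨_, hy, _, hz, rfl⟩
  obtain ⟨L₁, hL₁, rfl, hfirst₁, hlast₁⟩ := hY hy
  obtain ⟨L₂, hL₂, rfl, hfirst₂, hlast₂⟩ := hZ hz
  refine ⟨L₁ ++ L₂, IsStd.append hL₁ hL₂ fun f hf g hg => ?_, List.flatten_append.symm, ?_, ?_⟩
  · have := hlast₁ f hf
    have := hfirst₂ g hg
    cases t <;> cases u <;> simp_all
  · rwa [List.head?_append_of_ne_nil _ hL₁.1]
  · rwa [List.getLast?_append_of_ne_nil _ hL₂.1]

lemma powS_subset_stdDecomposable (hY : Y ⊆ stdDecomposable s t) (hst : s ≠ t) (n : ℕ) :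
    powS Y n ⊆ stdDecomposable s t := by
  induction n with
  | zero => exact hY
  | succ n ih => exact catS_subset_stdDecomposable hY ih hst.symm

end Concatenation

lemma altS_lettersS_subset {Z : Set (List (X ⊕ Bool))} (hZ : Z ⊆ frakXinf X) :
    altS (lettersS X) Z ⊆ {w | ∃ L, IsStd L ∧ w = L.flatten} := by
  have hD : ∀ s t, stdDecomposable (X := X) s t ⊆ {w | ∃ L, IsStd L ∧ w = L.flatten} := by
    rintro s t _ ⟨L, hL, rfl, -⟩
    exact ⟨L, hL, rfl⟩
  have hX := lettersS_subset_stdDecomposable (X := X)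
  have hB := brS_subset_stdDecomposable hZ
  have hXB := powS_subset_stdDecomposable
    (catS_subset_stdDecomposable hX hB (by decide)) (by decide)
  have hBX := powS_subset_stdDecomposable
    (catS_subset_stdDecomposable hB hX (by decide)) (by decide)
  simp only [altS, Set.union_subset_iff, Set.iUnion_subset_iff]
  exact ⟨⟨⟨fun n => (hXB n).trans (hD _ _), hX.trans (hD _ _),
    fun n => (catS_subset_stdDecomposable (hXB n) hX (by decide)).trans (hD _ _)⟩,
    fun n => (hBX n).trans (hD _ _)⟩, hB.trans (hD _ _),
    fun n => (catS_subset_stdDecomposable (hBX n) hB (by decide)).trans (hD _ _)⟩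

lemma exists_isStd_of_mem_frakXinf {w : List (X ⊕ Bool)} (hw : w ∈ frakXinf X) :
    ∃ L, IsStd L ∧ w = L.flatten := by
  obtain ⟨n, hn⟩ := Set.mem_iUnion.1 hw
  cases n with
  | zero =>
    obtain ⟨L, hL, rfl, -⟩ := lettersS_subset_stdDecomposable hn
    exact ⟨L, hL, rfl⟩
  | succ n => exact altS_lettersS_subset (Set.subset_iUnion (frakX X) n) hn

end RotaBaxterWord

/-- Every Rota-Baxter word `𝔵 ∈ 𝔛_∞` has a unique standard decomposition
`𝔵 = 𝔵₁𝔵₂⋯𝔵_b` with the factors lying alternately in `X` and `⌊𝔛_∞⌋`. -/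
theorem stmt_10 (X : Type*) :
    ∀ w ∈ frakXinf X, ∃! L : List (List (X ⊕ Bool)), IsStd L ∧ w = L.flatten := by
  intro w hw
  obtain ⟨L, hL, rfl⟩ := RotaBaxterWord.exists_isStd_of_mem_frakXinf hw
  refine ⟨L, ⟨hL, rfl⟩, fun L' ⟨hL', h⟩ => ?_⟩
  exact RotaBaxterWord.eq_of_flatten_eq (RotaBaxterWord.IsStd.isFactor hL')
    (RotaBaxterWord.IsStd.isFactor hL) h.symm
end

section
/- Let B be a nonunitary k-algebra with k-basis X, and let Ш⁰(B) be the free k-module on the set 𝔛_∞ of Rota-Baxter words, equipped with the product ⋄ defined recursively (concatenation when tail and head types differ; B-multiplication on X·X; and ⌊x̄⌋⋄⌊x̄'⌋ = ⌊⌊x̄⌋⋄x̄'⌋ + ⌊x̄⋄⌊x̄'⌋⌋ + λ⌊x̄⋄x̄'⌋). Then (Ш⁰(B), ⋄) is an associative (nonunitary) k-algebra. -/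
/-! The free `k`-module on words, basis elements, and the structural linear
maps (bracketing and one-sided concatenation), together with the head/tail
type of a Rota-Baxter word. -/

/-- The basis element of the free `k`-module on words given by the word `w`. -/
noncomputable def sw {X : Type*} (k : Type*) [CommRing k] (w : List (X ⊕ Bool)) :
    List (X ⊕ Bool) →₀ k := Finsupp.single w 1

/-- The linear operator `R_B` sending (the basis element of) a word `w` to `⌊w⌋`. -/
noncomputable def brL {X : Type*} (k : Type*) [CommRing k] :
    (List (X ⊕ Bool) →₀ k) →ₗ[k] (List (X ⊕ Bool) →₀ k) :=
  Finsupp.lmapDomain k k bracket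

/-- Left concatenation by a fixed word `p`, as a linear map. -/
noncomputable def lcat {X : Type*} (k : Type*) [CommRing k] (p : List (X ⊕ Bool)) :
    (List (X ⊕ Bool) →₀ k) →ₗ[k] (List (X ⊕ Bool) →₀ k) :=
  Finsupp.lmapDomain k k (fun w => p ++ w)

/-- Right concatenation by a fixed word `p`, as a linear map. -/
noncomputable def rcat {X : Type*} (k : Type*) [CommRing k] (p : List (X ⊕ Bool)) :
    (List (X ⊕ Bool) →₀ k) →ₗ[k] (List (X ⊕ Bool) →₀ k) :=
  Finsupp.lmapDomain k k (fun w => w ++ p)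

/-- A word has head type `1` iff it starts with the opening bracket `⌊`. -/
def startsBr {X : Type*} (w : List (X ⊕ Bool)) : Prop := w.head? = some lb

/-- A word has tail type `1` iff it ends with the closing bracket `⌋`. -/
def endsBr {X : Type*} (w : List (X ⊕ Bool)) : Prop := w.getLast? = some rb

/-- The tail type of `u` differs from the head type of `v`: `t(u) ≠ h(v)`. -/
def typeMismatch {X : Type*} (u v : List (X ⊕ Bool)) : Prop :=
  ¬ (endsBr u ↔ startsBr v)

/-!
Rota-Baxter words are the nonempty words alternating between letters and bracketed Rota-Baxter
words; `IsRBWord h t w` records this together with the head and tail types of `w`. The defining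
clauses of `⋄` show, by induction on length, that `u ⋄ v` is a combination of words with the head
type of `u` and the tail type of `v`. Associativity on words `u, v, w` then follows by induction on
the total length: if two neighbours have different types, both sides are concatenations; if one
of the words has breadth at least two, split off a factor with the concatenation clauses;
otherwise all three are letters, where it is associativity in `B`, or all three are brackets,
where expanding with the Rota-Baxter relation reduces it to seven triples of smaller total length.
Trilinearity extends it from words to `Ш⁰(B)`.
-/

theorem length_bracket {X : Type*} (u : List (X ⊕ Bool)) : (bracket u).length = u.length + 2 := by
  simp [bracket]

section RBWord

variable {X : Type*}

/-- Rota-Baxter words with head type `h` and tail type `t`, where `true` stands for a bracket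
and `false` for a letter. -/
inductive IsRBWord : Bool → Bool → List (X ⊕ Bool) → Prop
  | ofLetter (x : X) : IsRBWord false false (letter x)
  | ofBracket {h t : Bool} {u : List (X ⊕ Bool)} : IsRBWord h t u → IsRBWord true true (bracket u)
  | letter_append (x : X) {t : Bool} {v : List (X ⊕ Bool)} :
      IsRBWord true t v → IsRBWord false t (letter x ++ v)
  | bracket_append {h t t' : Bool} {u v : List (X ⊕ Bool)} :
      IsRBWord h t u → IsRBWord false t' v → IsRBWord true t' (bracket u ++ v)

namespace IsRBWord

variable {h t h' t' : Bool} {u v w : List (X ⊕ Bool)}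

theorem ne_nil (hw : IsRBWord h t w) : w ≠ [] := by
  cases hw <;> simp [letter, bracket]

theorem startsBr_iff (hw : IsRBWord h t w) : startsBr w ↔ h = true := by
  cases hw <;> simp [startsBr, letter, bracket, lb]

theorem endsBr_iff (hw : IsRBWord h t w) : endsBr w ↔ t = true := by
  induction hw with
  | ofLetter x => simp [endsBr, letter, rb]
  | ofBracket _ => simp [endsBr, bracket, List.getLast?_cons]
  | letter_append _ hv ih | bracket_append _ hv _ ih =>
    rwa [endsBr, List.getLast?_append_of_ne_nil _ hv.ne_nil]

theorem head_eq (hw : IsRBWord h t w) (hw' : IsRBWord h' t' w) : h = h' := by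
  have := hw.startsBr_iff.symm.trans hw'.startsBr_iff
  cases h <;> cases h' <;> simp_all

theorem typeMismatch_iff (hu : IsRBWord h t u) (hv : IsRBWord h' t' v) :
    typeMismatch u v ↔ t ≠ h' := by
  rw [typeMismatch, hu.endsBr_iff, hv.startsBr_iff]
  cases t <;> cases h' <;> simp

theorem append (hu : IsRBWord h t u) (hv : IsRBWord h' t' v) (hm : t ≠ h') :
    IsRBWord h t' (u ++ v) := by
  induction hu with
  | ofLetter x =>
    obtain rfl : h' = true := by simpa using hm.symm
    exact letter_append x hv
  | ofBracket hs =>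
    obtain rfl : h' = false := by simpa using hm.symm
    exact bracket_append hs hv
  | letter_append x _ ih => rw [List.append_assoc]; exact letter_append x (ih hm)
  | bracket_append hs _ _ ih => rw [List.append_assoc]; exact bracket_append hs (ih hm)

theorem eq_append_or_eq_letter_or_eq_bracket (hw : IsRBWord h t w) :
    (∃ a w' ta hw', IsRBWord h ta a ∧ IsRBWord hw' t w' ∧ ta ≠ hw' ∧ w = a ++ w') ∨
    (∃ x, w = letter x ∧ h = false ∧ t = false) ∨
    (∃ s hs ts, IsRBWord hs ts s ∧ w = bracket s ∧ h = true ∧ t = true) := by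
  cases hw with
  | ofLetter x => exact .inr (.inl ⟨x, rfl, rfl, rfl⟩)
  | ofBracket hs => exact .inr (.inr ⟨_, _, _, hs, rfl, rfl, rfl⟩)
  | letter_append x hv => exact .inl ⟨_, _, _, _, ofLetter x, hv, by simp, rfl⟩
  | bracket_append hs hv => exact .inl ⟨_, _, _, _, ofBracket hs, hv, by simp, rfl⟩

end IsRBWord

end RBWord

section WordSets

variable {X : Type*} {A A' B B' Y Z Z' : Set (List (X ⊕ Bool))}

def rbWords (X : Type*) (h t : Bool) : Set (List (X ⊕ Bool)) := {w | IsRBWord h t w}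

theorem mem_catS {a b : List (X ⊕ Bool)} (ha : a ∈ A) (hb : b ∈ B) : a ++ b ∈ catS A B :=
  ⟨a, ha, b, hb, rfl⟩

theorem catS_assoc (A B C : Set (List (X ⊕ Bool))) :
    catS (catS A B) C = catS A (catS B C) := by
  ext w
  constructor
  · rintro ⟨_, ⟨a, ha, b, hb, rfl⟩, c, hc, rfl⟩
    exact ⟨a, ha, b ++ c, mem_catS hb hc, by simp⟩
  · rintro ⟨a, ha, _, ⟨b, hb, c, hc, rfl⟩, rfl⟩
    exact ⟨a ++ b, mem_catS ha hb, c, hc, by simp⟩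

theorem catS_mono_s11 (hA : A ⊆ A') (hB : B ⊆ B') : catS A B ⊆ catS A' B' := by
  rintro _ ⟨a, ha, b, hb, rfl⟩
  exact mem_catS (hA ha) (hB hb)

theorem powS_mono (hA : A ⊆ A') (n : ℕ) : powS A n ⊆ powS A' n := by
  induction n with
  | zero => exact hA
  | succ n ih => exact catS_mono_s11 hA ih

theorem catS_powS_self (A : Set (List (X ⊕ Bool))) (n : ℕ) :
    catS (powS A n) A = powS A (n + 1) := by
  induction n with
  | zero => rfl
  | succ n ih =>
    show catS (catS A (powS A n)) A = catS A (powS A (n + 1))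
    rw [catS_assoc, ih]

theorem catS_powS_catS (A B : Set (List (X ⊕ Bool))) (n : ℕ) :
    catS A (powS (catS B A) n) = catS (powS (catS A B) n) A := by
  induction n with
  | zero => exact (catS_assoc A B A).symm
  | succ n ih =>
    rw [powS, powS, ← catS_assoc, ← catS_assoc A B A, catS_assoc (catS A B) A, ih,
      ← catS_assoc]

theorem altS_mono (hZ : Z ⊆ Z') : altS Y Z ⊆ altS Y Z' := by
  have hbr : brS Z ⊆ brS Z' := Set.image_mono hZ
  have h1 n := powS_mono (catS_mono_s11 subset_rfl hbr) (A := catS Y (brS Z)) n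
  have h2 n := powS_mono (catS_mono_s11 hbr subset_rfl) (A := catS (brS Z) Y) n
  refine Set.union_subset_union (Set.union_subset_union (Set.union_subset_union ?_ ?_) ?_) ?_
  · exact Set.iUnion_mono h1
  · exact Set.union_subset_union subset_rfl (Set.iUnion_mono fun n => catS_mono_s11 (h1 n) subset_rfl)
  · exact Set.iUnion_mono h2
  · exact Set.union_subset_union hbr (Set.iUnion_mono fun n => catS_mono_s11 (h2 n) hbr)

theorem monotone_frakX : Monotone (frakX X) := by
  refine monotone_nat_of_le_succ fun n => ?_
  induction n with
  | zero => exact fun _ hw => Or.inl (Or.inl (Or.inr (Or.inl hw)))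
  | succ n ih => exact altS_mono ih

theorem catS_subset_rbWords {h t h' t' : Bool} (hA : A ⊆ rbWords X h t)
    (hB : B ⊆ rbWords X h' t') (hm : t ≠ h') : catS A B ⊆ rbWords X h t' := by
  rintro _ ⟨a, ha, b, hb, rfl⟩
  exact (hA ha).append (hB hb) hm

theorem powS_subset_rbWords {h t : Bool} (hA : A ⊆ rbWords X h t) (hm : t ≠ h) (n : ℕ) :
    powS A n ⊆ rbWords X h t := by
  induction n with
  | zero => exact hA
  | succ n ih => exact catS_subset_rbWords hA ih hm

theorem lettersS_subset_rbWords : lettersS X ⊆ rbWords X false false := by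
  rintro _ ⟨x, rfl⟩
  exact .ofLetter x

variable (hZ : ∀ z ∈ Z, ∃ h t, IsRBWord h t z)
include hZ

theorem brS_subset_rbWords : brS Z ⊆ rbWords X true true := by
  rintro _ ⟨z, hz, rfl⟩
  obtain ⟨h, t, hz⟩ := hZ z hz
  exact hz.ofBracket

theorem powS_catS_lettersS_brS_subset (n : ℕ) :
    powS (catS (lettersS X) (brS Z)) n ⊆ rbWords X false true :=
  powS_subset_rbWords (catS_subset_rbWords lettersS_subset_rbWords (brS_subset_rbWords hZ)
    (by simp)) (by simp) n

theorem powS_catS_brS_lettersS_subset (n : ℕ) :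
    powS (catS (brS Z) (lettersS X)) n ⊆ rbWords X true false :=
  powS_subset_rbWords (catS_subset_rbWords (brS_subset_rbWords hZ) lettersS_subset_rbWords
    (by simp)) (by simp) n

theorem isRBWord_of_mem_altS {w : List (X ⊕ Bool)} (hw : w ∈ altS (lettersS X) Z) :
    ∃ h t, IsRBWord h t w := by
  have hY := lettersS_subset_rbWords (X := X)
  have hC := brS_subset_rbWords hZ
  have h1 := powS_catS_lettersS_brS_subset hZ
  have h2 := powS_catS_brS_lettersS_subset hZ
  simp only [altS, Set.mem_union, Set.mem_iUnion] at hw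
  rcases hw with ((⟨n, hw⟩ | hw | ⟨n, hw⟩) | ⟨n, hw⟩) | hw | ⟨n, hw⟩
  exacts [⟨_, _, h1 n hw⟩, ⟨_, _, hY hw⟩, ⟨_, _, catS_subset_rbWords (h1 n) hY (by simp) hw⟩,
    ⟨_, _, h2 n hw⟩, ⟨_, _, hC hw⟩, ⟨_, _, catS_subset_rbWords (h2 n) hC (by simp) hw⟩]

theorem letter_append_mem_altS {t : Bool} {v : List (X ⊕ Bool)}
    (hv : v ∈ altS (lettersS X) Z) (hvt : IsRBWord true t v) (x : X) :
    letter x ++ v ∈ altS (lettersS X) Z := by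
  have hx : letter x ∈ lettersS X := ⟨x, rfl⟩
  have h1 := powS_catS_lettersS_brS_subset hZ
  simp only [altS, Set.mem_union, Set.mem_iUnion] at hv ⊢
  rcases hv with ((⟨n, hv⟩ | hv | ⟨n, hv⟩) | ⟨n, hv⟩) | hv | ⟨n, hv⟩
  · exact absurd (hvt.head_eq (h1 n hv)) (by simp)
  · exact absurd (hvt.head_eq (lettersS_subset_rbWords hv)) (by simp)
  · exact absurd (hvt.head_eq (catS_subset_rbWords (h1 n) lettersS_subset_rbWords (by simp) hv))
      (by simp)
  · refine .inl (.inl (.inr (.inr ⟨n, ?_⟩)))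
    rw [← catS_powS_catS]
    exact mem_catS hx hv
  · exact .inl (.inl (.inl ⟨0, mem_catS hx hv⟩))
  · refine .inl (.inl (.inl ⟨n + 1, ?_⟩))
    rw [← catS_powS_self, ← catS_assoc, ← catS_powS_catS, catS_assoc]
    exact mem_catS hx hv

theorem bracket_append_mem_altS {t : Bool} {v z : List (X ⊕ Bool)}
    (hv : v ∈ altS (lettersS X) Z) (hvt : IsRBWord false t v) (hz : z ∈ Z) :
    bracket z ++ v ∈ altS (lettersS X) Z := by
  have hzC : bracket z ∈ brS Z := ⟨z, hz, rfl⟩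
  have hC := brS_subset_rbWords hZ
  have h2 := powS_catS_brS_lettersS_subset hZ
  simp only [altS, Set.mem_union, Set.mem_iUnion] at hv ⊢
  rcases hv with ((⟨n, hv⟩ | hv | ⟨n, hv⟩) | ⟨n, hv⟩) | hv | ⟨n, hv⟩
  · refine .inr (.inr ⟨n, ?_⟩)
    rw [← catS_powS_catS]
    exact mem_catS hzC hv
  · exact .inl (.inr ⟨0, mem_catS hzC hv⟩)
  · refine .inl (.inr ⟨n + 1, ?_⟩)
    rw [← catS_powS_self, ← catS_assoc, ← catS_powS_catS, catS_assoc]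
    exact mem_catS hzC hv
  · exact absurd (hvt.head_eq (h2 n hv)) (by simp)
  · exact absurd (hvt.head_eq (hC hv)) (by simp)
  · exact absurd (hvt.head_eq (catS_subset_rbWords (h2 n) hC (by simp) hv)) (by simp)

end WordSets

theorem isRBWord_of_mem_frakX {X : Type*} {w : List (X ⊕ Bool)} :
    ∀ {n}, w ∈ frakX X n → ∃ h t, IsRBWord h t w
  | 0, ⟨x, hx⟩ => hx ▸ ⟨_, _, .ofLetter x⟩
  | _ + 1, hw => isRBWord_of_mem_altS (fun _ => isRBWord_of_mem_frakX) hw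

theorem IsRBWord.exists_mem_frakX {X : Type*} {h t : Bool} {w : List (X ⊕ Bool)}
    (hw : IsRBWord h t w) : ∃ n, w ∈ frakX X n := by
  induction hw with
  | ofLetter x => exact ⟨0, x, rfl⟩
  | @ofBracket _ _ u _ ih =>
    obtain ⟨n, hn⟩ := ih
    exact ⟨n + 1, .inr (.inl ⟨u, hn, rfl⟩)⟩
  | letter_append x hv ih =>
    obtain ⟨_ | n, hn⟩ := ih
    · obtain ⟨y, rfl⟩ := hn
      exact absurd (hv.head_eq (.ofLetter y)) (by simp)
    · exact ⟨n + 1, letter_append_mem_altS (fun _ => isRBWord_of_mem_frakX) hn hv x⟩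
  | @bracket_append _ _ _ u _ _ hv ihu ihv =>
    obtain ⟨m, hm⟩ := ihu
    obtain ⟨n, hn⟩ := ihv
    refine ⟨max m n + 1, bracket_append_mem_altS (fun _ => isRBWord_of_mem_frakX) ?_ hv
      (monotone_frakX (le_max_left m n) hm)⟩
    exact monotone_frakX (Nat.succ_le_succ (le_max_right m n)) (monotone_frakX n.le_succ hn)

theorem mem_frakXinf_iff {X : Type*} {w : List (X ⊕ Bool)} :
    w ∈ frakXinf X ↔ ∃ h t, IsRBWord h t w := by
  simp only [frakXinf, Set.mem_iUnion]
  exact ⟨fun ⟨_, hw⟩ => isRBWord_of_mem_frakX hw,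
    fun ⟨_, _, hw⟩ => hw.exists_mem_frakX⟩

theorem IsRBWord.mem_frakXinf {X : Type*} {h t : Bool} {w : List (X ⊕ Bool)}
    (hw : IsRBWord h t w) : w ∈ frakXinf X :=
  mem_frakXinf_iff.2 ⟨h, t, hw⟩

theorem bracket_mem_frakXinf {X : Type*} {u : List (X ⊕ Bool)} (hu : u ∈ frakXinf X) :
    bracket u ∈ frakXinf X := by
  obtain ⟨h, t, hu⟩ := mem_frakXinf_iff.1 hu
  exact hu.ofBracket.mem_frakXinf

theorem LinearMap.eqOn_span₂ {R M N P : Type*} [CommSemiring R] [AddCommMonoid M]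
    [AddCommMonoid N] [AddCommMonoid P] [Module R M] [Module R N] [Module R P]
    (f g : M →ₗ[R] N →ₗ[R] P) {s : Set M} {t : Set N}
    (h : ∀ x ∈ s, ∀ y ∈ t, f x y = g x y) {x : M} (hx : x ∈ Submodule.span R s)
    {y : N} (hy : y ∈ Submodule.span R t) : f x y = g x y :=
  LinearMap.eqOn_span (f := f.flip y) (g := g.flip y)
    (fun x' hx' => LinearMap.eqOn_span (f := f x') (g := g x') (h x' hx') hy) hx

theorem LinearMap.apply_mem_of_mem_span₂ {R M N P : Type*} [CommSemiring R] [AddCommMonoid M]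
    [AddCommMonoid N] [AddCommMonoid P] [Module R M] [Module R N] [Module R P]
    (f : M →ₗ[R] N →ₗ[R] P) {s : Set M} {t : Set N} {p : Submodule R P}
    (h : ∀ x ∈ s, ∀ y ∈ t, f x y ∈ p) {x : M} (hx : x ∈ Submodule.span R s)
    {y : N} (hy : y ∈ Submodule.span R t) : f x y ∈ p := by
  have : Submodule.map₂ f (Submodule.span R s) (Submodule.span R t) ≤ p := by
    rw [Submodule.map₂_span_span, Submodule.span_le]
    rintro _ ⟨x, hx, y, hy, rfl⟩
    exact h x hx y hy
  exact this (Submodule.apply_mem_map₂ f hx hy)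

section FreeModule

variable {X k : Type*} [CommRing k]

theorem lmapDomain_sw (f : List (X ⊕ Bool) → List (X ⊕ Bool)) (w : List (X ⊕ Bool)) :
    Finsupp.lmapDomain k k f (sw k w) = sw k (f w) := by
  simp [sw]

theorem brL_sw (w : List (X ⊕ Bool)) : brL k (sw k w) = sw k (bracket w) :=
  lmapDomain_sw _ w

theorem lcat_sw (p w : List (X ⊕ Bool)) : lcat k p (sw k w) = sw k (p ++ w) :=
  lmapDomain_sw _ w

theorem rcat_sw (p w : List (X ⊕ Bool)) : rcat k p (sw k w) = sw k (w ++ p) :=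
  lmapDomain_sw _ w

variable (k) in
noncomputable def concat₂ :
    (List (X ⊕ Bool) →₀ k) →ₗ[k] (List (X ⊕ Bool) →₀ k) →ₗ[k] (List (X ⊕ Bool) →₀ k) :=
  Finsupp.lsum k fun p => LinearMap.toSpanSingleton k _ (lcat k p)

theorem concat₂_sw_left (p : List (X ⊕ Bool)) (m : List (X ⊕ Bool) →₀ k) :
    concat₂ k (sw k p) m = lcat k p m := by
  simp [concat₂, sw]

theorem concat₂_sw_sw (p q : List (X ⊕ Bool)) :
    concat₂ k (sw k p) (sw k q) = sw k (p ++ q) := by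
  rw [concat₂_sw_left, lcat_sw]

theorem concat₂_sw_right (q : List (X ⊕ Bool)) (m : List (X ⊕ Bool) →₀ k) :
    concat₂ k m (sw k q) = rcat k q m := by
  refine LinearMap.congr_fun (f := (concat₂ k).flip (sw k q)) (Finsupp.lhom_ext' fun p =>
    LinearMap.ext_ring ?_) m
  simpa [sw] using concat₂_sw_sw (k := k) p q |>.trans (rcat_sw q p).symm

end FreeModule

section TypedSpans

variable {k X : Type*} [CommRing k] {h t h' t' : Bool}

variable (k X) in
noncomputable def rbSpan (h t : Bool) : Submodule k (List (X ⊕ Bool) →₀ k) :=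
  Submodule.span k (sw k '' rbWords X h t)

theorem sw_mem_rbSpan {w : List (X ⊕ Bool)} (hw : IsRBWord h t w) : sw k w ∈ rbSpan k X h t :=
  Submodule.subset_span ⟨w, hw, rfl⟩

theorem rbSpan_le_span_frakXinf :
    rbSpan k X h t ≤ Submodule.span k (sw k '' frakXinf X) :=
  Submodule.span_mono (Set.image_mono fun _ hw => IsRBWord.mem_frakXinf hw)

theorem concat₂_mem_rbSpan {m n : List (X ⊕ Bool) →₀ k} (hm : m ∈ rbSpan k X h t)
    (hn : n ∈ rbSpan k X h' t') (ht : t ≠ h') : concat₂ k m n ∈ rbSpan k X h t' := by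
  refine LinearMap.apply_mem_of_mem_span₂ _ ?_ hm hn
  rintro _ ⟨u, hu, rfl⟩ _ ⟨v, hv, rfl⟩
  rw [concat₂_sw_sw]
  exact sw_mem_rbSpan (hu.append hv ht)

theorem brL_mem_rbSpan {m : List (X ⊕ Bool) →₀ k}
    (hm : m ∈ Submodule.span k (sw k '' frakXinf X)) : brL k m ∈ rbSpan k X true true := by
  refine (Submodule.span_le (p := (rbSpan k X true true).comap (brL k))).2 ?_ hm
  rintro _ ⟨u, hu, rfl⟩
  obtain ⟨_, _, hu⟩ := mem_frakXinf_iff.1 hu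
  simpa [brL_sw] using sw_mem_rbSpan hu.ofBracket

theorem constr_mem_rbSpan {B : Type*} [AddCommMonoid B] [Module k B]
    (bX : Module.Basis X k B) (b : B) :
    bX.constr k (fun x : X => sw k (letter x)) b ∈ rbSpan k X false false := by
  have hb : bX.constr k (fun x : X => sw k (letter x)) b ∈ LinearMap.range _ := ⟨b, rfl⟩
  rw [Module.Basis.constr_range] at hb
  refine Submodule.span_le.2 ?_ hb
  rintro _ ⟨x, rfl⟩
  exact sw_mem_rbSpan (.ofLetter x)

end TypedSpans

section Product

variable {k X : Type*} [CommRing k] {h t h' t' : Bool} (lam : k)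
    (mul : (List (X ⊕ Bool) →₀ k) →ₗ[k] (List (X ⊕ Bool) →₀ k) →ₗ[k]
      (List (X ⊕ Bool) →₀ k))
    (hconcat : ∀ u ∈ frakXinf X, ∀ v ∈ frakXinf X, typeMismatch u v →
      mul (sw k u) (sw k v) = sw k (u ++ v))
    (hbr : ∀ u ∈ frakXinf X, ∀ v ∈ frakXinf X,
      mul (sw k (bracket u)) (sw k (bracket v)) =
        brL k (mul (sw k (bracket u)) (sw k v)) +
          brL k (mul (sw k u) (sw k (bracket v))) +
          lam • brL k (mul (sw k u) (sw k v)))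
    (hsplitL : ∀ u ∈ frakXinf X, ∀ v ∈ frakXinf X, typeMismatch u v →
      ∀ w ∈ frakXinf X, mul (sw k (u ++ v)) (sw k w) = lcat k u (mul (sw k v) (sw k w)))
    (hsplitR : ∀ u ∈ frakXinf X, ∀ v ∈ frakXinf X, typeMismatch u v →
      ∀ w ∈ frakXinf X, mul (sw k w) (sw k (u ++ v)) = rcat k v (mul (sw k w) (sw k u)))

local notation "Ш" => Submodule.span k (sw k '' frakXinf X)

include hconcat in
theorem mul_eq_concat₂ {m n : List (X ⊕ Bool) →₀ k} (hm : m ∈ rbSpan k X h t)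
    (hn : n ∈ rbSpan k X h' t') (ht : t ≠ h') : mul m n = concat₂ k m n := by
  refine LinearMap.eqOn_span₂ mul (concat₂ k) ?_ hm hn
  rintro _ ⟨u, hu, rfl⟩ _ ⟨v, hv, rfl⟩
  rw [concat₂_sw_sw]
  exact hconcat u hu.mem_frakXinf v hv.mem_frakXinf ((hu.typeMismatch_iff hv).2 ht)

include hsplitL in
theorem concat₂_mul_assoc {m n w : List (X ⊕ Bool) →₀ k} (hm : m ∈ rbSpan k X h t)
    (hn : n ∈ rbSpan k X h' t') (ht : t ≠ h') (hw : w ∈ Ш) :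
    mul (concat₂ k m n) w = concat₂ k m (mul n w) := by
  have := LinearMap.eqOn_span₂ ((concat₂ k).compr₂ (mul.flip w))
    ((concat₂ k).compl₂ (mul.flip w)) ?_ hm hn
  · simpa using this
  rintro _ ⟨u, hu, rfl⟩ _ ⟨v, hv, rfl⟩
  simp only [LinearMap.compr₂_apply, LinearMap.compl₂_apply, LinearMap.flip_apply,
    concat₂_sw_left, lcat_sw]
  refine LinearMap.eqOn_span (f := mul (sw k (u ++ v))) (g := lcat k u ∘ₗ mul (sw k v))
    ?_ hw
  rintro _ ⟨c, hc, rfl⟩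
  exact hsplitL u hu.mem_frakXinf v hv.mem_frakXinf ((hu.typeMismatch_iff hv).2 ht) c hc

include hsplitR in
theorem mul_concat₂_assoc {m n w : List (X ⊕ Bool) →₀ k} (hm : m ∈ rbSpan k X h t)
    (hn : n ∈ rbSpan k X h' t') (ht : t ≠ h') (hw : w ∈ Ш) :
    mul w (concat₂ k m n) = concat₂ k (mul w m) n := by
  have := LinearMap.eqOn_span₂ ((concat₂ k).compr₂ (mul w)) (concat₂ k ∘ₗ mul w) ?_ hm hn
  · simpa using this
  rintro _ ⟨u, hu, rfl⟩ _ ⟨v, hv, rfl⟩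
  simp only [LinearMap.compr₂_apply, LinearMap.comp_apply, concat₂_sw_right, rcat_sw]
  refine LinearMap.eqOn_span (f := mul.flip (sw k (u ++ v)))
    (g := rcat k v ∘ₗ mul.flip (sw k u)) ?_ hw
  rintro _ ⟨c, hc, rfl⟩
  exact hsplitR u hu.mem_frakXinf v hv.mem_frakXinf ((hu.typeMismatch_iff hv).2 ht) c hc

include hbr in
theorem mul_brL_brL {m n : List (X ⊕ Bool) →₀ k} (hm : m ∈ Ш) (hn : n ∈ Ш) :
    mul (brL k m) (brL k n) =
      brL k (mul (brL k m) n) + brL k (mul m (brL k n)) + lam • brL k (mul m n) := by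
  have := LinearMap.eqOn_span₂ (mul.compl₁₂ (brL k) (brL k))
    ((mul.compl₁₂ (brL k) LinearMap.id).compr₂ (brL k) +
      (mul.compl₁₂ LinearMap.id (brL k)).compr₂ (brL k) + lam • mul.compr₂ (brL k)) ?_ hm hn
  · simpa using this
  rintro _ ⟨u, hu, rfl⟩ _ ⟨v, hv, rfl⟩
  simpa [brL_sw] using hbr u hu v hv

def AssocAt (u v w : List (X ⊕ Bool)) : Prop :=
  mul (mul (sw k u) (sw k v)) (sw k w) = mul (sw k u) (mul (sw k v) (sw k w))

theorem mul_constr_constr {B : Type*} [NonUnitalNonAssocSemiring B] [Module k B]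
    [SMulCommClass k B B] [IsScalarTower k B B] (bX : Module.Basis X k B)
    (hXX : ∀ x x' : X, mul (sw k (letter x)) (sw k (letter x')) =
      (bX.constr k fun x₀ : X => sw k (letter x₀)) (bX x * bX x')) (a b : B) :
    mul (bX.constr k (fun x₀ : X => sw k (letter x₀)) a)
      (bX.constr k (fun x₀ : X => sw k (letter x₀)) b) =
      bX.constr k (fun x₀ : X => sw k (letter x₀)) (a * b) := by
  set ι := bX.constr k fun x₀ : X => sw k (letter x₀)
  have := LinearMap.ext_basis (B := mul.compl₁₂ ι ι) (B' := (LinearMap.mul k B).compr₂ ι) bX bX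
    fun i j => by simpa [ι] using hXX i j
  simpa using LinearMap.congr_fun₂ this a b

theorem assocAt_letter {B : Type*} [NonUnitalSemiring B] [Module k B]
    [SMulCommClass k B B] [IsScalarTower k B B] (bX : Module.Basis X k B)
    (hXX : ∀ x x' : X, mul (sw k (letter x)) (sw k (letter x')) =
      (bX.constr k fun x₀ : X => sw k (letter x₀)) (bX x * bX x')) (x y z : X) :
    AssocAt mul (letter x) (letter y) (letter z) := by
  have hι (x : X) : sw k (letter x) = bX.constr k (fun x₀ : X => sw k (letter x₀)) (bX x) :=
    (bX.constr_basis k (fun x₀ : X => sw k (letter x₀)) x).symm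
  rw [AssocAt, hι x, hι y, hι z]
  simp only [mul_constr_constr mul bX hXX, mul_assoc]

include hconcat hbr hsplitL hsplitR in
theorem mul_sw_mem_rbSpan {B : Type*} [NonUnitalNonAssocSemiring B] [Module k B]
    (bX : Module.Basis X k B)
    (hXX : ∀ x x' : X, mul (sw k (letter x)) (sw k (letter x')) =
      (bX.constr k fun x₀ : X => sw k (letter x₀)) (bX x * bX x'))
    {hu tu hv tv : Bool} {u v : List (X ⊕ Bool)} (h1 : IsRBWord hu tu u)
    (h2 : IsRBWord hv tv v) : mul (sw k u) (sw k v) ∈ rbSpan k X hu tv := by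
  rcases h1.eq_append_or_eq_letter_or_eq_bracket with ⟨a, u', s, s', ha, hu', hau, rfl⟩ | h1'
  · rw [← concat₂_sw_sw, concat₂_mul_assoc mul hsplitL (sw_mem_rbSpan ha) (sw_mem_rbSpan hu') hau
      (Submodule.subset_span ⟨v, h2.mem_frakXinf, rfl⟩)]
    exact concat₂_mem_rbSpan (sw_mem_rbSpan ha) (mul_sw_mem_rbSpan bX hXX hu' h2) hau
  rcases h2.eq_append_or_eq_letter_or_eq_bracket with ⟨b, v', s, s', hb, hv', hbv, rfl⟩ | h2'
  · rw [← concat₂_sw_sw, mul_concat₂_assoc mul hsplitR (sw_mem_rbSpan hb) (sw_mem_rbSpan hv') hbv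
      (Submodule.subset_span ⟨u, h1.mem_frakXinf, rfl⟩)]
    exact concat₂_mem_rbSpan (mul_sw_mem_rbSpan bX hXX h1 hb) (sw_mem_rbSpan hv') hbv
  by_cases htype : tu = hv
  swap
  · rw [mul_eq_concat₂ mul hconcat (sw_mem_rbSpan h1) (sw_mem_rbSpan h2) htype]
    exact concat₂_mem_rbSpan (sw_mem_rbSpan h1) (sw_mem_rbSpan h2) htype
  rcases h1' with ⟨x, rfl, rfl, rfl⟩ | ⟨s, _, _, hs, rfl, rfl, rfl⟩ <;>
    rcases h2' with ⟨y, rfl, rfl, rfl⟩ | ⟨r, _, _, hr, rfl, rfl, rfl⟩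
  · rw [hXX]
    exact constr_mem_rbSpan bX _
  · exact absurd htype (by decide)
  · exact absurd htype (by decide)
  · have hterm {h t h' t' : Bool} {u v : List (X ⊕ Bool)} (hu : IsRBWord h t u)
        (hv : IsRBWord h' t' v)
        (hlen : u.length + v.length < (bracket s).length + (bracket r).length) :
        brL k (mul (sw k u) (sw k v)) ∈ rbSpan k X true true :=
      brL_mem_rbSpan (rbSpan_le_span_frakXinf (mul_sw_mem_rbSpan bX hXX hu hv))
    rw [hbr s hs.mem_frakXinf r hr.mem_frakXinf]
    refine add_mem (add_mem (hterm hs.ofBracket hr ?_) (hterm hs hr.ofBracket ?_))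
      (Submodule.smul_mem _ _ (hterm hs hr ?_)) <;> simp only [length_bracket] <;> omega
termination_by u.length + v.length
decreasing_by
  · have := List.length_pos_iff.2 ha.ne_nil
    subst_vars; simp only [List.length_append]; omega
  · have := List.length_pos_iff.2 hv'.ne_nil
    subst_vars; simp only [List.length_append]; omega
  · subst_vars; exact hlen

include hconcat hbr hsplitL hsplitR in
theorem mul_sw_mem_span {B : Type*} [NonUnitalNonAssocSemiring B] [Module k B]
    (bX : Module.Basis X k B)
    (hXX : ∀ x x' : X, mul (sw k (letter x)) (sw k (letter x')) =
      (bX.constr k fun x₀ : X => sw k (letter x₀)) (bX x * bX x'))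
    {u v : List (X ⊕ Bool)} (hu : u ∈ frakXinf X) (hv : v ∈ frakXinf X) :
    mul (sw k u) (sw k v) ∈ Ш := by
  obtain ⟨_, _, hu⟩ := mem_frakXinf_iff.1 hu
  obtain ⟨_, _, hv⟩ := mem_frakXinf_iff.1 hv
  exact rbSpan_le_span_frakXinf (mul_sw_mem_rbSpan lam mul hconcat hbr hsplitL hsplitR bX hXX hu hv)

section Cases

variable {h₁ t₁ h₂ t₂ h₃ t₃ h₄ t₄ : Bool} {u v w a b : List (X ⊕ Bool)}

include hconcat hsplitL in
theorem assocAt_of_mismatch_left (hu : IsRBWord h₁ t₁ u) (hv : IsRBWord h₂ t₂ v)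
    (hw : w ∈ frakXinf X) (ht : t₁ ≠ h₂) (hvw : mul (sw k v) (sw k w) ∈ rbSpan k X h₂ t₃) :
    AssocAt mul u v w := by
  have huv := (hu.typeMismatch_iff hv).2 ht
  rw [AssocAt, hconcat u hu.mem_frakXinf v hv.mem_frakXinf huv,
    hsplitL u hu.mem_frakXinf v hv.mem_frakXinf huv w hw,
    mul_eq_concat₂ mul hconcat (sw_mem_rbSpan hu) hvw ht, concat₂_sw_left]

include hconcat hsplitR in
theorem assocAt_of_mismatch_right (hu : u ∈ frakXinf X) (hv : IsRBWord h₂ t₂ v)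
    (hw : IsRBWord h₃ t₃ w) (ht : t₂ ≠ h₃) (huv : mul (sw k u) (sw k v) ∈ rbSpan k X h₁ t₂) :
    AssocAt mul u v w := by
  have hvw := (hv.typeMismatch_iff hw).2 ht
  rw [AssocAt, hconcat v hv.mem_frakXinf w hw.mem_frakXinf hvw,
    hsplitR v hv.mem_frakXinf w hw.mem_frakXinf hvw u hu,
    mul_eq_concat₂ mul hconcat huv (sw_mem_rbSpan hw) ht, concat₂_sw_right]

include hsplitL hsplitR in
theorem assocAt_append_middle (hu : u ∈ frakXinf X) (ha : IsRBWord h₂ t₂ a)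
    (hb : IsRBWord h₃ t₃ b) (ht : t₂ ≠ h₃) (hw : w ∈ frakXinf X)
    (hua : mul (sw k u) (sw k a) ∈ rbSpan k X h₄ t₂)
    (hbw : mul (sw k b) (sw k w) ∈ rbSpan k X h₃ t₄) :
    AssocAt mul u (a ++ b) w := by
  have hu' : sw k u ∈ Ш := Submodule.subset_span ⟨u, hu, rfl⟩
  have hw' : sw k w ∈ Ш := Submodule.subset_span ⟨w, hw, rfl⟩
  rw [AssocAt, ← concat₂_sw_sw,
    mul_concat₂_assoc mul hsplitR (sw_mem_rbSpan ha) (sw_mem_rbSpan hb) ht hu',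
    concat₂_mul_assoc mul hsplitL hua (sw_mem_rbSpan hb) ht hw',
    concat₂_mul_assoc mul hsplitL (sw_mem_rbSpan ha) (sw_mem_rbSpan hb) ht hw',
    mul_concat₂_assoc mul hsplitR (sw_mem_rbSpan ha) hbw ht hu']

include hsplitL in
theorem assocAt_append_left (ha : IsRBWord h₁ t₁ a) (hu : IsRBWord h₂ t₂ u) (ht : t₁ ≠ h₂)
    (hv : v ∈ frakXinf X) (hw : w ∈ frakXinf X) (huv : mul (sw k u) (sw k v) ∈ rbSpan k X h₂ t₃)
    (hvw : mul (sw k v) (sw k w) ∈ Ш) (hassoc : AssocAt mul u v w) :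
    AssocAt mul (a ++ u) v w := by
  rw [AssocAt, ← concat₂_sw_sw,
    concat₂_mul_assoc mul hsplitL (sw_mem_rbSpan ha) (sw_mem_rbSpan hu) ht
      (Submodule.subset_span ⟨v, hv, rfl⟩),
    concat₂_mul_assoc mul hsplitL (sw_mem_rbSpan ha) huv ht (Submodule.subset_span ⟨w, hw, rfl⟩),
    concat₂_mul_assoc mul hsplitL (sw_mem_rbSpan ha) (sw_mem_rbSpan hu) ht hvw, hassoc]

include hsplitR in
theorem assocAt_append_right (hu : u ∈ frakXinf X) (hv : v ∈ frakXinf X)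
    (ha : IsRBWord h₁ t₁ a) (hw : IsRBWord h₂ t₂ w) (ht : t₁ ≠ h₂)
    (hva : mul (sw k v) (sw k a) ∈ rbSpan k X h₃ t₁) (huv : mul (sw k u) (sw k v) ∈ Ш)
    (hassoc : AssocAt mul u v a) :
    AssocAt mul u v (a ++ w) := by
  rw [AssocAt, ← concat₂_sw_sw,
    mul_concat₂_assoc mul hsplitR (sw_mem_rbSpan ha) (sw_mem_rbSpan hw) ht huv,
    mul_concat₂_assoc mul hsplitR (sw_mem_rbSpan ha) (sw_mem_rbSpan hw) ht
      (Submodule.subset_span ⟨v, hv, rfl⟩),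
    mul_concat₂_assoc mul hsplitR hva (sw_mem_rbSpan hw) ht (Submodule.subset_span ⟨u, hu, rfl⟩),
    hassoc]

end Cases

include hbr in
theorem assocAt_bracket {p q r : List (X ⊕ Bool)}
    (hmem : ∀ u ∈ frakXinf X, ∀ v ∈ frakXinf X, mul (sw k u) (sw k v) ∈ Ш)
    (hp : p ∈ frakXinf X) (hq : q ∈ frakXinf X) (hr : r ∈ frakXinf X)
    (ih : ∀ a ∈ frakXinf X, ∀ b ∈ frakXinf X, ∀ c ∈ frakXinf X,
      a.length + b.length + c.length <
        (bracket p).length + (bracket q).length + (bracket r).length → AssocAt mul a b c) :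
    AssocAt mul (bracket p) (bracket q) (bracket r) := by
  have hP := bracket_mem_frakXinf hp
  have hQ := bracket_mem_frakXinf hq
  have hR := bracket_mem_frakXinf hr
  have hbrL {m} (hm : m ∈ Ш) : mul (brL k m) (sw k (bracket r)) =
      brL k (mul (brL k m) (sw k r)) + brL k (mul m (sw k (bracket r))) +
        lam • brL k (mul m (sw k r)) := by
    simpa only [brL_sw] using mul_brL_brL lam mul hbr hm (Submodule.subset_span ⟨r, hr, rfl⟩)
  have hbrR {m} (hm : m ∈ Ш) : mul (sw k (bracket p)) (brL k m) =
      brL k (mul (sw k (bracket p)) m) + brL k (mul (sw k p) (brL k m)) +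
        lam • brL k (mul (sw k p) m) := by
    simpa only [brL_sw] using mul_brL_brL lam mul hbr (Submodule.subset_span ⟨p, hp, rfl⟩) hm
  have := length_bracket p
  have := length_bracket q
  have := length_bracket r
  -- Both sides expand into nine bracketed terms, which match up by associativity on the seven
  -- triples obtained by removing some of the outer brackets.
  have hPQr : mul (sw k (bracket p)) (mul (sw k (bracket q)) (sw k r)) =
      mul (brL k (mul (sw k (bracket p)) (sw k q))) (sw k r) +
        mul (brL k (mul (sw k p) (sw k (bracket q)))) (sw k r) +
        lam • mul (brL k (mul (sw k p) (sw k q))) (sw k r) := by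
    rw [← ih _ hP _ hQ _ hr (by omega), hbr p hp q hq]
    simp only [map_add, map_smul, LinearMap.add_apply, LinearMap.smul_apply]
  have hpQR : mul (mul (sw k p) (sw k (bracket q))) (sw k (bracket r)) =
      mul (sw k p) (brL k (mul (sw k (bracket q)) (sw k r))) +
        mul (sw k p) (brL k (mul (sw k q) (sw k (bracket r)))) +
        lam • mul (sw k p) (brL k (mul (sw k q) (sw k r))) := by
    rw [ih _ hp _ hQ _ hR (by omega), hbr q hq r hr]
    simp only [map_add, map_smul]
  rw [AssocAt, hbr p hp q hq, hbr q hq r hr]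
  simp only [map_add, map_smul, LinearMap.add_apply, LinearMap.smul_apply]
  rw [hbrL (hmem _ hP q hq), hbrL (hmem p hp _ hQ), hbrL (hmem p hp q hq),
    hbrR (hmem _ hQ r hr), hbrR (hmem q hq _ hR), hbrR (hmem q hq r hr), hPQr, hpQR,
    ih _ hP _ hq _ hR (by omega), ih _ hp _ hq _ hR (by omega), ih _ hP _ hq _ hr (by omega),
    ih _ hp _ hQ _ hr (by omega), ih _ hp _ hq _ hr (by omega)]
  simp only [map_add, map_smul, smul_add, smul_smul]
  module

include hconcat hbr hsplitL hsplitR in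
theorem assocAt_of_mem_frakXinf {B : Type*} [NonUnitalSemiring B] [Module k B]
    [SMulCommClass k B B] [IsScalarTower k B B] (bX : Module.Basis X k B)
    (hXX : ∀ x x' : X, mul (sw k (letter x)) (sw k (letter x')) =
      (bX.constr k fun x₀ : X => sw k (letter x₀)) (bX x * bX x'))
    {u v w : List (X ⊕ Bool)} (hu : u ∈ frakXinf X) (hv : v ∈ frakXinf X)
    (hw : w ∈ frakXinf X) : AssocAt mul u v w := by
  have hmem {h t h' t' : Bool} {a b : List (X ⊕ Bool)} (ha : IsRBWord h t a)
      (hb : IsRBWord h' t' b) :=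
    mul_sw_mem_rbSpan lam mul hconcat hbr hsplitL hsplitR bX hXX ha hb
  obtain ⟨h₁, t₁, hu'⟩ := mem_frakXinf_iff.1 hu
  obtain ⟨h₂, t₂, hv'⟩ := mem_frakXinf_iff.1 hv
  obtain ⟨h₃, t₃, hw'⟩ := mem_frakXinf_iff.1 hw
  by_cases c₁ : t₁ = h₂
  swap
  · exact assocAt_of_mismatch_left mul hconcat hsplitL hu' hv' hw c₁ (hmem hv' hw')
  by_cases c₂ : t₂ = h₃
  swap
  · exact assocAt_of_mismatch_right mul hconcat hsplitR hu hv' hw' c₂ (hmem hu' hv')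
  rcases hv'.eq_append_or_eq_letter_or_eq_bracket with ⟨a, b, s, s', ha, hb, hab, rfl⟩ | hv₁
  · exact assocAt_append_middle mul hsplitL hsplitR hu ha hb hab hw (hmem hu' ha) (hmem hb hw')
  rcases hu'.eq_append_or_eq_letter_or_eq_bracket with ⟨a, b, s, s', ha, hb, hab, rfl⟩ | hu₁
  · exact assocAt_append_left mul hsplitL ha hb hab hv hw (hmem hb hv')
      (mul_sw_mem_span lam mul hconcat hbr hsplitL hsplitR bX hXX hv hw)
      (assocAt_of_mem_frakXinf bX hXX hb.mem_frakXinf hv hw)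
  rcases hw'.eq_append_or_eq_letter_or_eq_bracket with ⟨a, b, s, s', ha, hb, hab, rfl⟩ | hw₁
  · exact assocAt_append_right mul hsplitR hu hv ha hb hab (hmem hv' ha)
      (mul_sw_mem_span lam mul hconcat hbr hsplitL hsplitR bX hXX hu hv)
      (assocAt_of_mem_frakXinf bX hXX hu hv ha.mem_frakXinf)
  rcases hu₁ with ⟨x, rfl, rfl, rfl⟩ | ⟨p, _, _, hp, rfl, rfl, rfl⟩ <;>
    rcases hv₁ with ⟨y, rfl, rfl, rfl⟩ | ⟨q, _, _, hq, rfl, rfl, rfl⟩ <;>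
    rcases hw₁ with ⟨z, rfl, rfl, rfl⟩ | ⟨r, _, _, hr, rfl, rfl, rfl⟩ <;>
    cases c₁ <;> cases c₂
  · exact assocAt_letter mul bX hXX x y z
  · exact assocAt_bracket lam mul hbr
      (fun _ ha _ hb => mul_sw_mem_span lam mul hconcat hbr hsplitL hsplitR bX hXX ha hb)
      hp.mem_frakXinf hq.mem_frakXinf hr.mem_frakXinf
      fun _ ha _ hb _ hc hlen => assocAt_of_mem_frakXinf bX hXX ha hb hc
termination_by u.length + v.length + w.length
decreasing_by
  · have := List.length_pos_iff.2 ha.ne_nil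
    subst_vars; simp only [List.length_append]; omega
  · have := List.length_pos_iff.2 hb.ne_nil
    subst_vars; simp only [List.length_append]; omega
  · subst_vars; exact hlen

end Product

/-- Let `B` be a nonunitary `k`-algebra with `k`-basis `X`, and let
`Ш⁰(B)` be (the span of the Rota-Baxter words inside) the free `k`-module
on words, equipped with a bilinear product `⋄` (`mul`) satisfying the
recursive defining clauses: concatenation when tail and head types differ,
multiplication in `B` on `X·X`, the bracket clause
`⌊u⌋⋄⌊v⌋ = ⌊⌊u⌋⋄v⌋ + ⌊u⋄⌊v⌋⌋ + λ⌊u⋄v⌋`, and compatibility with standard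
decompositions. Then `(Ш⁰(B), ⋄)` is an associative (nonunitary) `k`-algebra. -/
theorem stmt_11 {k X B : Type*} [CommRing k]
    [NonUnitalRing B] [Module k B] [SMulCommClass k B B] [IsScalarTower k B B]
    (bX : Module.Basis X k B) (lam : k)
    (mul : (List (X ⊕ Bool) →₀ k) →ₗ[k] (List (X ⊕ Bool) →₀ k) →ₗ[k]
      (List (X ⊕ Bool) →₀ k))
    (hconcat : ∀ u ∈ frakXinf X, ∀ v ∈ frakXinf X, typeMismatch u v →
      mul (sw k u) (sw k v) = sw k (u ++ v))
    (hXX : ∀ x x' : X,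
      mul (sw k (letter x)) (sw k (letter x')) =
        (bX.constr k fun x₀ : X => sw k (letter x₀)) (bX x * bX x'))
    (hbr : ∀ u ∈ frakXinf X, ∀ v ∈ frakXinf X,
      mul (sw k (bracket u)) (sw k (bracket v)) =
        brL k (mul (sw k (bracket u)) (sw k v)) +
          brL k (mul (sw k u) (sw k (bracket v))) +
          lam • brL k (mul (sw k u) (sw k v)))
    (hsplitL : ∀ u ∈ frakXinf X, ∀ v ∈ frakXinf X, typeMismatch u v →
      ∀ w ∈ frakXinf X, mul (sw k (u ++ v)) (sw k w) = lcat k u (mul (sw k v) (sw k w)))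
    (hsplitR : ∀ u ∈ frakXinf X, ∀ v ∈ frakXinf X, typeMismatch u v →
      ∀ w ∈ frakXinf X, mul (sw k w) (sw k (u ++ v)) = rcat k v (mul (sw k w) (sw k u))) :
    ∀ a ∈ Submodule.span k (sw k '' frakXinf X),
      ∀ b ∈ Submodule.span k (sw k '' frakXinf X),
        ∀ c ∈ Submodule.span k (sw k '' frakXinf X),
          mul (mul a b) c = mul a (mul b c) := by
  intro a ha b hb c hc
  refine LinearMap.eqOn_span (f := mul (mul a b)) (g := mul a ∘ₗ mul b) ?_ hc
  rintro _ ⟨w, hw, rfl⟩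
  have := LinearMap.eqOn_span₂ (mul.compr₂ (mul.flip (sw k w))) (mul.compl₂ (mul.flip (sw k w)))
    ?_ ha hb
  · simpa using this
  rintro _ ⟨u, hu, rfl⟩ _ ⟨v, hv, rfl⟩
  simpa [AssocAt] using assocAt_of_mem_frakXinf lam mul hconcat hbr hsplitL hsplitR bX hXX hu hv hw
end
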